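/- Let G be a connected simple graph with at least 3 vertices, x, y distinct vertices, and σ ∈ A_y \ A_x with |σ| ≥ 2. Suppose e ∈ σ is a leaf-edge of G_σ whose leaf endpoint w satisfies: w ≠ x, and w is not adjacent in G to any vertex z ∈ V(G) \ V_σ. Then σ \ {e} ∈ A_y \ A_x. -/

import Mathlib

open SimpleGraph

/-- `Shade_v(F)`: edges of `G` with an endpoint connected to `v` by an `F`-path. -/
def Shade {V : Type*} (G : SimpleGraph V) (v : V) (F : Set (Sym2 V)) : Set (Sym2 V) :=
  {e ∈ G.edgeSet | ∃ u ∈ e, (SimpleGraph.fromEdgeSet F).Reachable u v}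

/-- The simplicial complex `A_v`. -/
def Avert {V : Type*} (G : SimpleGraph V) (v : V) : Set (Set (Sym2 V)) :=
  {F | F ⊆ G.edgeSet ∧ Shade G v F ⊂ G.edgeSet}

/-- Vertex set of the edge-induced subgraph `G_σ`. -/
def edgeVerts {V : Type*} (σ : Set (Sym2 V)) : Set V :=
  {u | ∃ e ∈ σ, u ∈ e}

/-- Connectedness of the edge-induced subgraph `G_σ`. -/
def edgeConnected {V : Type*} (σ : Set (Sym2 V)) : Prop :=
  σ.Nonempty ∧ ∀ u ∈ edgeVerts σ, ∀ w ∈ edgeVerts σ,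
    (SimpleGraph.fromEdgeSet σ).Reachable u w

/-- `X` is a vertex cover of `G`. -/
def IsVertexCover {V : Type*} (G : SimpleGraph V) (X : Set V) : Prop :=
  ∀ e ∈ G.edgeSet, ∃ u ∈ e, u ∈ X

/-- A nucleus of `G`: a connected subgraph whose vertex set is a vertex cover. -/
def IsNucleus {V : Type*} (G : SimpleGraph V) (N : G.Subgraph) : Prop :=
  N.Connected ∧ _root_.IsVertexCover G N.verts

/-- The `U`-nucleus complex `Δ^G_U`. -/
def nucleusComplex {V : Type*} (G : SimpleGraph V) (U : Set V) : Set (Set (Sym2 V)) :=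
  {S | ∃ N : G.Subgraph, IsNucleus G N ∧ U ⊆ N.verts ∧ S = G.edgeSet \ N.edgeSet}

/-!
Deleting the leaf-edge `e = s(w, w')` cannot disconnect two vertices other than `w`, since a
walk through the leaf `w` must enter and leave it along `e`. Every vertex of `G_σ` reaches `x`
in `G_σ` (as `σ ∉ A_x`), so every vertex of `G_σ` other than `w` still reaches `x` after
deleting `e`. An edge of `G` at `w` ends in a vertex of `G_σ` by hypothesis, so it stays in the
shade of `x`; every other edge of `G` already had an endpoint `u ≠ w` joined to `x`. Hence
`σ \ {e} ∉ A_x`, while `σ \ {e} ∈ A_y` because `A_y` is closed under subsets.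
-/

section

variable {V : Type*}

lemma shade_subset_edgeSet (G : SimpleGraph V) (v : V) (F : Set (Sym2 V)) :
    Shade G v F ⊆ G.edgeSet :=
  fun _ hf => hf.1

lemma shade_mono (G : SimpleGraph V) (v : V) {F F' : Set (Sym2 V)} (h : F ⊆ F') :
    Shade G v F ⊆ Shade G v F' :=
  fun _ ⟨hf, u, hu, hreach⟩ => ⟨hf, u, hu, hreach.mono (fromEdgeSet_mono h)⟩

lemma mem_avert_of_subset {G : SimpleGraph V} {v : V} {F F' : Set (Sym2 V)}
    (hF : F ∈ Avert G v) (h : F' ⊆ F) : F' ∈ Avert G v :=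
  ⟨h.trans hF.1, (shade_mono G v h).trans_ssubset hF.2⟩

lemma notMem_avert_iff {G : SimpleGraph V} {v : V} {F : Set (Sym2 V)} (hF : F ⊆ G.edgeSet) :
    F ∉ Avert G v ↔ Shade G v F = G.edgeSet := by
  simp only [Avert, Set.mem_ofPred_eq, hF, true_and, Set.ssubset_iff_subset_ne,
    shade_subset_edgeSet G v F, ne_eq, not_not]

lemma reachable_of_mem_of_mem {F : Set (Sym2 V)} {f : Sym2 V} (hf : f ∈ F) {a b : V}
    (ha : a ∈ f) (hb : b ∈ f) : (fromEdgeSet F).Reachable a b := by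
  by_cases hab : a = b
  · exact hab ▸ Reachable.refl a
  · rw [(Sym2.mem_and_mem_iff hab).mp ⟨ha, hb⟩] at hf
    exact ((fromEdgeSet_adj _).mpr ⟨hf, hab⟩).reachable

lemma reachable_of_subset_shade {G : SimpleGraph V} {v : V} {F : Set (Sym2 V)}
    (hF : F ⊆ Shade G v F) {z : V} (hz : z ∈ edgeVerts F) : (fromEdgeSet F).Reachable z v := by
  obtain ⟨f, hfF, hzf⟩ := hz
  obtain ⟨u, huf, hu⟩ := (hF hfF).2
  exact (reachable_of_mem_of_mem hfF hzf huf).trans hu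

/-- A walk leaving the leaf `w` must start along `s(w, w')`, so without that edge it can start
at `w'` instead; the `if` makes this statement stable under induction on walks. -/
lemma reachable_sdiff_leafEdge [DecidableEq V] {σ : Set (Sym2 V)} {w w' : V}
    (hleaf : ∀ f ∈ σ, w ∈ f → f = s(w, w')) {u v : V} (hv : v ≠ w)
    (h : (fromEdgeSet σ).Reachable u v) :
    (fromEdgeSet (σ \ {s(w, w')})).Reachable (if u = w then w' else u) v := by
  obtain ⟨p⟩ := h
  induction p with
  | nil => rw [if_neg hv]
  | @cons u b v hub q ih =>
    obtain ⟨hubσ, hub⟩ := (fromEdgeSet_adj _).mp hub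
    specialize ih hv
    by_cases hu : u = w
    · subst hu
      have hb : b = w' := Sym2.congr_right.mp (hleaf _ hubσ (Sym2.mem_mk_left u b))
      rw [if_neg (Ne.symm hub), hb] at ih
      rwa [if_pos rfl]
    rw [if_neg hu]
    by_cases hb : b = w
    · subst hb
      have hu' : u = w' :=
        Sym2.congr_right.mp (Sym2.eq_swap.trans (hleaf _ hubσ (Sym2.mem_mk_right u b)))
      rw [if_pos rfl] at ih
      rwa [hu']
    · have hwub : w ∉ s(u, b) := by simp [Ne.symm hu, Ne.symm hb]
      have hadj : (fromEdgeSet (σ \ {s(w, w')})).Adj u b :=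
        (fromEdgeSet_adj _).mpr ⟨⟨hubσ, fun he => hwub (he ▸ Sym2.mem_mk_left w w')⟩, hub⟩
      rw [if_neg hb] at ih
      exact hadj.reachable.trans ih

lemma reachable_sdiff_leafEdge_of_ne {σ : Set (Sym2 V)} {w w' : V}
    (hleaf : ∀ f ∈ σ, w ∈ f → f = s(w, w')) {u v : V} (hu : u ≠ w) (hv : v ≠ w)
    (h : (fromEdgeSet σ).Reachable u v) :
    (fromEdgeSet (σ \ {s(w, w')})).Reachable u v := by
  classical
  simpa only [if_neg hu] using reachable_sdiff_leafEdge hleaf hv h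

end

theorem stmt_13_general {V : Type*} (G : SimpleGraph V) (x y : V)
    (σ : Set (Sym2 V)) (hσ : σ ∈ Avert G y \ Avert G x)
    (e : Sym2 V) (w : V) (hwe : w ∈ e)
    (hleaf : ∀ f ∈ σ, w ∈ f → f = e)
    (hwx : w ≠ x)
    (hwz : ∀ z : V, z ∉ edgeVerts σ → ¬ G.Adj w z) :
    σ \ {e} ∈ Avert G y \ Avert G x := by
  obtain ⟨hσy, hσx⟩ := hσ
  obtain ⟨w', rfl⟩ := Sym2.mem_iff_exists.mp hwe
  have hshade := (notMem_avert_iff hσy.1).mp hσx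
  have hreach : ∀ z ∈ edgeVerts σ, (fromEdgeSet σ).Reachable z x :=
    fun z => reachable_of_subset_shade (hshade ▸ hσy.1)
  refine ⟨mem_avert_of_subset hσy Set.sdiff_subset,
    (notMem_avert_iff (Set.sdiff_subset.trans hσy.1)).mpr ?_⟩
  refine (shade_subset_edgeSet G x _).antisymm fun g hg => ⟨hg, ?_⟩
  obtain ⟨u, hug, hux⟩ := (hshade ▸ hg : g ∈ Shade G x σ).2
  by_cases hu : u = w
  · subst hu
    obtain ⟨z, rfl⟩ := Sym2.mem_iff_exists.mp hug
    have hadj : G.Adj u z := hg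
    have hz : z ∈ edgeVerts σ := by_contra fun hz => hwz z hz hadj
    exact ⟨z, Sym2.mem_mk_right u z,
      reachable_sdiff_leafEdge_of_ne hleaf hadj.ne.symm hwx.symm (hreach z hz)⟩
  · exact ⟨u, hug, reachable_sdiff_leafEdge_of_ne hleaf hu hwx.symm hux⟩

theorem stmt_13 {V : Type*} [Fintype V] (G : SimpleGraph V) (hG : G.Connected)
    (h3 : 3 ≤ Fintype.card V) (x y : V) (hxy : x ≠ y)
    (σ : Set (Sym2 V)) (hσ : σ ∈ Avert G y \ Avert G x) (hσ2 : 2 ≤ σ.ncard)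
    (e : Sym2 V) (he : e ∈ σ) (w : V) (hwe : w ∈ e)
    (hleaf : ∀ f ∈ σ, w ∈ f → f = e)
    (hwx : w ≠ x)
    (hwz : ∀ z : V, z ∉ edgeVerts σ → ¬ G.Adj w z) :
    σ \ {e} ∈ Avert G y \ Avert G x :=
  stmt_13_general G x y σ hσ e w hwe hleaf hwx hwz
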